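/- arXiv:1712.08077 — 2 statements merged into one kernel-verified Lean document; each statement's English description precedes it below -/
import Mathlib

section
/- Let 1 < q ≤ p ≤ 2, with conjugate exponents p', q', and let c > 1. There exists a constant C > 0 (depending only on p, q and c) such that for all m, n ∈ ℕ with n ≥ 2 and (log n)^{1/c} ≤ m ≤ (log n)^{c}, one has ( Σ_{α ∈ Λ(m−1,n)} ((m−1)!/α!)^{(1/p − 1/q) q'} )^{1/q'} ≤ C^m · n^{m/q'} / (log n)^{m/p'}. -/
open scoped ENNReal NNReal BigOperators

/-- The `ℓ_p` norm on `ℂ^n`, for `p ∈ [1,∞]` (an extended real). -/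
noncomputable def lpNorm (p : ℝ≥0∞) {n : ℕ} (z : Fin n → ℂ) : ℝ :=
  if p = ∞ then ⨆ i, ‖z i‖ else (∑ i, ‖z i‖ ^ p.toReal) ^ (1 / p.toReal)

/-- The closed ball of radius `r` of `ℓ_p^n`. -/
def lpBall (p : ℝ≥0∞) (n : ℕ) (r : ℝ) : Set (Fin n → ℂ) :=
  {z | lpNorm p z ≤ r}

/-- The mixed `(p,q)`-Bohr radius `K(B_{ℓ_p^n}, B_{ℓ_q^n})`: the supremum of all `r ≥ 0`
such that for every entire function `f` on `ℂ^n` with monomial expansion coefficients `a`,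
`sup_{z ∈ r·B_{ℓ_q^n}} Σ_α |a_α z^α| ≤ sup_{z ∈ B_{ℓ_p^n}} |f(z)|`. -/
noncomputable def mixedBohrRadius (p q : ℝ≥0∞) (n : ℕ) : ℝ :=
  sSup {r : ℝ | 0 ≤ r ∧ ∀ (f : (Fin n → ℂ) → ℂ) (a : (Fin n → ℕ) → ℂ),
    (∀ z : Fin n → ℂ, HasSum (fun α : Fin n → ℕ => a α * ∏ i, z i ^ α i) (f z)) →
    ∀ z ∈ lpBall q n r,
      (∑' α : Fin n → ℕ, ((‖a α‖₊ : ℝ≥0∞) * ∏ i, (‖z i‖₊ : ℝ≥0∞) ^ α i))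
        ≤ ⨆ w ∈ lpBall p n 1, (‖f w‖₊ : ℝ≥0∞)}

/-- `Λ(m,n)`, the finite set of multi-indices `α ∈ ℕ_0^n` with `|α| = m`. -/
def Lam (m n : ℕ) : Finset (Fin n → ℕ) := Finset.Nat.antidiagonalTuple n m

/-- The mixed `(p,q)`-unconditional constant `χ_M(𝒫(^m ℓ_p^n), 𝒫(^m ℓ_q^n))`: the least
`λ > 0` such that for all coefficients `a` and unimodular `θ`,
`sup_{z ∈ B_{ℓ_q^n}} |Σ θ_α a_α z^α| ≤ λ · sup_{z ∈ B_{ℓ_p^n}} |Σ a_α z^α|`. -/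
noncomputable def unconditionalConst (m : ℕ) (p q : ℝ≥0∞) (n : ℕ) : ℝ :=
  sInf {l : ℝ | 0 < l ∧ ∀ (a θ : (Fin n → ℕ) → ℂ), (∀ α ∈ Lam m n, ‖θ α‖ = 1) →
    ∀ z ∈ lpBall q n 1,
      ‖∑ α ∈ Lam m n, θ α * a α * ∏ i, z i ^ α i‖ ≤
        l * ⨆ w ∈ lpBall p n 1, ‖∑ α ∈ Lam m n, a α * ∏ i, w i ^ α i‖}

/-- The `m`-homogeneous mixed Bohr radius `K_m(B_{ℓ_p^n}, B_{ℓ_q^n})`: the greatest `r > 0`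
such that for every `m`-homogeneous polynomial `P = Σ_{|α|=m} a_α z^α`,
`sup_{z ∈ r·B_{ℓ_q^n}} Σ |a_α z^α| ≤ sup_{z ∈ B_{ℓ_p^n}} |P(z)|`. -/
noncomputable def homBohrRadius (m : ℕ) (p q : ℝ≥0∞) (n : ℕ) : ℝ :=
  sSup {r : ℝ | 0 < r ∧ ∀ a : (Fin n → ℕ) → ℂ, ∀ z ∈ lpBall q n r,
      ∑ α ∈ Lam m n, ‖a α‖ * ∏ i, ‖z i‖ ^ α i ≤
        ⨆ w ∈ lpBall p n 1, ‖∑ α ∈ Lam m n, a α * ∏ i, w i ^ α i‖}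

/-!
Put `s = (1/q - 1/p) q' ≥ 0`; the summand is then `(∏ αᵢ!)^s / ((m-1)!)^s`, and
`q'/p' = 1 + s`.
With `x = m/n`, the generating-function bound
`x^(m-1) Σ_α ∏ αᵢ!^s ≤ (Σ_a a!^s x^a)^n ≤ exp (n Σ_{a ≥ 1} a!^s x^a)`
and `a! ≤ m^(a-1)` reduce everything to the geometric sum `Σ_j ρ^j` with `ρ = m^(1+s)/n`.
That sum is at most `2` when `ρ ≤ 1/2`; otherwise `n < 2 m^(1+s) ≤ 2 (log n)^(c(1+s))`, which
bounds `n`, hence `m`. Finally `(log n / m)^((1+s)m) ≤ (1+s)^((1+s)m) n` and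
`(m-1)! ≥ m^(m-1) e^(-m)` turn `(n/m)^(m-1) / ((m-1)!)^s` into `C^m n^m / (log n)^((1+s)m)`.
-/

open Finset Real
open scoped Nat

lemma rpow_le_rpow_self_mul_exp {t A : ℝ} (ht : 0 ≤ t) (hA : 0 < A) :
    t ^ A ≤ A ^ A * exp t := by
  rcases ht.eq_or_lt with rfl | ht
  · rw [zero_rpow hA.ne']; positivity
  have h := log_le_sub_one_of_pos (div_pos ht hA)
  rw [log_div ht.ne' hA.ne', le_sub_iff_add_le, le_div_iff₀ hA] at h
  rw [rpow_def_of_pos ht, rpow_def_of_pos hA, ← exp_add]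
  gcongr
  nlinarith

lemma le_two_mul_log_of_exp_le_mul_rpow {t A K : ℝ} (ht : 0 ≤ t) (hA : 0 < A)
    (h : exp t ≤ K * t ^ A) : t ≤ 2 * log (K * (2 * A) ^ A) := by
  have hhalf : t ^ A ≤ (2 * A) ^ A * exp (t / 2) := by
    calc t ^ A = 2 ^ A * (t / 2) ^ A := by
          rw [← mul_rpow zero_le_two (by positivity)]; ring_nf
      _ ≤ 2 ^ A * (A ^ A * exp (t / 2)) := by
          gcongr; exact rpow_le_rpow_self_mul_exp (by positivity) hA
      _ = (2 * A) ^ A * exp (t / 2) := by rw [mul_rpow zero_le_two hA.le]; ring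
  have hK : 0 ≤ K := by
    by_contra! hK
    linarith [mul_nonpos_of_nonpos_of_nonneg hK.le (rpow_nonneg ht A), exp_pos t]
  have hexp : exp (t / 2) * exp (t / 2) ≤ K * (2 * A) ^ A * exp (t / 2) := by
    rw [← exp_add, add_halves]
    calc exp t ≤ K * t ^ A := h
      _ ≤ K * ((2 * A) ^ A * exp (t / 2)) := by gcongr
      _ = _ := by ring
  have := le_of_mul_le_mul_right hexp (exp_pos _)
  have hpos : 0 < K * (2 * A) ^ A := (exp_pos _).trans_le this
  linarith [(le_log_iff_exp_le hpos).2 this]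

lemma sum_prod_le_pow_sum_range (k n : ℕ) (g : ℕ → ℝ) (hg : ∀ a, 0 ≤ g a) :
    ∑ α ∈ Lam k n, ∏ i, g (α i) ≤ (∑ a ∈ range (k + 1), g a) ^ n := by
  have hsub : Lam k n ⊆ Fintype.piFinset fun _ ↦ range (k + 1) := by
    intro α hα
    rw [Lam, Finset.Nat.mem_antidiagonalTuple] at hα
    simp only [Fintype.mem_piFinset, mem_range, Nat.lt_succ_iff, ← hα]
    exact fun i ↦ single_le_sum (fun j _ ↦ Nat.zero_le (α j)) (mem_univ i)
  calc ∑ α ∈ Lam k n, ∏ i, g (α i)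
      ≤ ∑ α ∈ Fintype.piFinset (fun _ : Fin n ↦ range (k + 1)), ∏ i, g (α i) :=
        sum_le_sum_of_subset_of_nonneg hsub fun α _ _ ↦ prod_nonneg fun i _ ↦ hg _
    _ = (∑ a ∈ range (k + 1), g a) ^ n := by
        rw [← prod_univ_sum, prod_const, card_univ, Fintype.card_fin]

lemma pow_mul_sum_prod_factorial_rpow_le_exp (s : ℝ) (k n : ℕ) {x : ℝ} (hx : 0 ≤ x) :
    x ^ k * ∑ α ∈ Lam k n, ∏ i, ((α i)! : ℝ) ^ s ≤
      exp (n * ∑ j ∈ range k, ((j + 1)! : ℝ) ^ s * x ^ (j + 1)) := by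
  set y := ∑ j ∈ range k, ((j + 1)! : ℝ) ^ s * x ^ (j + 1)
  have hy : 0 ≤ y := sum_nonneg fun j _ ↦ by positivity
  calc x ^ k * ∑ α ∈ Lam k n, ∏ i, ((α i)! : ℝ) ^ s
      = ∑ α ∈ Lam k n, ∏ i, (((α i)! : ℝ) ^ s * x ^ α i) := by
        rw [mul_sum]
        refine sum_congr rfl fun α hα ↦ ?_
        rw [prod_mul_distrib, prod_pow_eq_pow_sum,
          Finset.Nat.mem_antidiagonalTuple.1 hα, mul_comm]
    _ ≤ (∑ a ∈ range (k + 1), (a ! : ℝ) ^ s * x ^ a) ^ n :=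
        sum_prod_le_pow_sum_range k n (fun a ↦ (a ! : ℝ) ^ s * x ^ a) fun a ↦ by positivity
    _ = (y + 1) ^ n := by simp [y, sum_range_succ']
    _ ≤ exp y ^ n := by gcongr; exact add_one_le_exp y
    _ = exp (n * y) := (exp_nat_mul y n).symm

lemma factorial_succ_le_pow {j m : ℕ} (h : j + 1 ≤ m) : (j + 1)! ≤ m ^ j := by
  induction j with
  | zero => simp
  | succ j ih =>
    rw [Nat.factorial_succ, pow_succ']
    exact Nat.mul_le_mul (by omega) (ih (by omega))

lemma factorial_rpow_mul_pow_le {s x : ℝ} (hs : 0 ≤ s) (hx : 0 ≤ x) {j m : ℕ}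
    (h : j + 1 ≤ m) :
    ((j + 1)! : ℝ) ^ s * x ^ (j + 1) ≤ x * ((m : ℝ) ^ s * x) ^ j := by
  have hfac : ((j + 1)! : ℝ) ≤ (m : ℝ) ^ j := by exact_mod_cast factorial_succ_le_pow h
  calc ((j + 1)! : ℝ) ^ s * x ^ (j + 1) ≤ ((m : ℝ) ^ j) ^ s * x ^ (j + 1) := by gcongr
    _ = x * ((m : ℝ) ^ s * x) ^ j := by rw [← rpow_pow_comm (Nat.cast_nonneg _)]; ring

lemma exists_forall_sum_geometric_le {s c : ℝ} (hs : 0 ≤ s) (hc : 0 < c) :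
    ∃ B, ∀ m n : ℕ, 2 ≤ n → (m : ℝ) ≤ log n ^ c →
      ∑ j ∈ range (m - 1), ((m : ℝ) ^ s * (m / n)) ^ j ≤ B := by
  set A := c * (1 + s)
  set M := (2 * log (2 * (2 * A) ^ A)) ^ c
  set R := M ^ (1 + s)
  refine ⟨max 2 (∑ j ∈ range ⌈M⌉₊, R ^ j), fun m n hn hmL ↦ ?_⟩
  have hn1 : (1 : ℝ) ≤ n := by exact_mod_cast one_le_two.trans hn
  have hL : 0 ≤ log n := log_nonneg hn1
  set ρ := (m : ℝ) ^ s * (m / n)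
  have hρ : 0 ≤ ρ := by positivity
  rcases le_or_gt ρ (1 / 2) with hsmall | hlarge
  · exact le_max_of_le_left <|
      (sum_le_sum fun j _ ↦ pow_le_pow_left₀ hρ hsmall j).trans (sum_geometric_two_le _)
  refine le_max_of_le_right ?_
  have hρm : ρ = (m : ℝ) ^ (1 + s) / n := by
    rw [rpow_add' (Nat.cast_nonneg _) (by positivity), rpow_one]; ring
  have hlogn : log n ≤ 2 * log (2 * (2 * A) ^ A) := by
    refine le_two_mul_log_of_exp_le_mul_rpow hL (by positivity) ?_
    rw [exp_log (by positivity)]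
    calc (n : ℝ) ≤ 2 * (m : ℝ) ^ (1 + s) := by
          rw [hρm, lt_div_iff₀ (by positivity)] at hlarge; linarith
      _ ≤ 2 * (log n ^ c) ^ (1 + s) := by gcongr
      _ = 2 * log n ^ A := by rw [← rpow_mul hL]
  have hmM : (m : ℝ) ≤ M := hmL.trans (rpow_le_rpow hL hlogn hc.le)
  have hρR : ρ ≤ R := by
    rw [hρm]
    calc (m : ℝ) ^ (1 + s) / n ≤ (m : ℝ) ^ (1 + s) := div_le_self (by positivity) hn1
      _ ≤ R := rpow_le_rpow (Nat.cast_nonneg _) hmM (by positivity)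
  have hmN : m - 1 ≤ ⌈M⌉₊ := by
    have : m ≤ ⌈M⌉₊ := by exact_mod_cast hmM.trans (Nat.le_ceil M)
    omega
  calc ∑ j ∈ range (m - 1), ρ ^ j ≤ ∑ j ∈ range ⌈M⌉₊, ρ ^ j :=
        sum_le_sum_of_subset_of_nonneg (range_subset_range.2 hmN) fun j _ _ ↦ by positivity
    _ ≤ ∑ j ∈ range ⌈M⌉₊, R ^ j := by gcongr

lemma log_rpow_pow_le {A x : ℝ} (hA : 0 < A) (hx : 1 ≤ x) {m : ℕ} (hm : 1 ≤ m) :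
    (log x ^ A) ^ m ≤ ((2 * A) ^ A) ^ m * x * ((m : ℝ) ^ (m - 1)) ^ A := by
  have hm0 : (0 : ℝ) < m := by exact_mod_cast hm
  have hL : 0 ≤ log x := log_nonneg hx
  have hquot : ((log x / m) ^ A) ^ m ≤ (A ^ A) ^ m * x := by
    calc ((log x / m) ^ A) ^ m ≤ (A ^ A * exp (log x / m)) ^ m := by
          gcongr; exact rpow_le_rpow_self_mul_exp (by positivity) hA
      _ = (A ^ A) ^ m * x := by
          rw [mul_pow, ← exp_nat_mul, mul_div_cancel₀ _ hm0.ne', exp_log (by linarith)]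
  have hm2 : (m : ℝ) ^ A ≤ (2 ^ A) ^ m := by
    calc (m : ℝ) ^ A ≤ ((2 : ℝ) ^ m) ^ A := by
          gcongr; exact_mod_cast Nat.lt_two_pow_self.le
      _ = (2 ^ A) ^ m := (rpow_pow_comm zero_le_two A m).symm
  have hpow : ((m : ℝ) ^ A) ^ m = (m : ℝ) ^ A * ((m : ℝ) ^ (m - 1)) ^ A := by
    rw [← rpow_pow_comm hm0.le, ← pow_succ', Nat.sub_add_cancel hm]
  calc (log x ^ A) ^ m = ((log x / m) ^ A) ^ m * ((m : ℝ) ^ A) ^ m := by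
        rw [← mul_pow, ← mul_rpow (by positivity) hm0.le, div_mul_cancel₀ _ hm0.ne']
    _ ≤ (A ^ A) ^ m * x * ((2 ^ A) ^ m * ((m : ℝ) ^ (m - 1)) ^ A) := by
        rw [hpow]; gcongr
    _ = ((2 * A) ^ A) ^ m * x * ((m : ℝ) ^ (m - 1)) ^ A := by
        rw [mul_rpow zero_le_two hA.le]; ring

lemma pow_pred_le_exp_mul_factorial {m : ℕ} (hm : 1 ≤ m) :
    (m : ℝ) ^ (m - 1) ≤ exp m * (m - 1)! := by
  obtain ⟨k, rfl⟩ := Nat.exists_eq_add_of_le' hm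
  have h := pow_div_factorial_le_exp (x := ((k + 1 : ℕ) : ℝ)) (by positivity) (k + 1)
  rw [div_le_iff₀ (by positivity), Nat.factorial_succ, pow_succ] at h
  push_cast at h ⊢
  nlinarith [exp_pos ((k : ℝ) + 1)]

lemma exists_sum_multinomial_rpow_neg_le {s c : ℝ} (hs : 0 ≤ s) (hc : 0 < c) :
    ∃ K > 0, ∀ m n : ℕ, 2 ≤ n → 1 ≤ m → (m : ℝ) ≤ log n ^ c →
      ∑ α ∈ Lam (m - 1) n, (((m - 1)! : ℝ) / ∏ i, ((α i)! : ℝ)) ^ (-s) ≤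
        K ^ m * (n / log n ^ (1 + s)) ^ m := by
  obtain ⟨B, hB⟩ := exists_forall_sum_geometric_le hs hc
  set A := 1 + s
  refine ⟨(2 * A) ^ A * exp (s + B), by positivity, fun m n hn hm hmL ↦ ?_⟩
  have hn1 : (1 : ℝ) < n := by exact_mod_cast hn
  have hm0 : (0 : ℝ) < m := by exact_mod_cast hm
  have hL : 0 < log n := log_pos hn1
  set k := m - 1
  set x := (m : ℝ) / n
  set P := ∑ α ∈ Lam k n, ∏ i, ((α i)! : ℝ) ^ s
  have hS :
      ∑ α ∈ Lam k n, ((k ! : ℝ) / ∏ i, ((α i)! : ℝ)) ^ (-s) = P / (k ! : ℝ) ^ s := by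
    rw [sum_div]
    refine sum_congr rfl fun α _ ↦ ?_
    rw [rpow_neg (by positivity), ← inv_rpow (by positivity), inv_div,
      div_rpow (by positivity) (by positivity), finsetProd_rpow _ _ fun i _ ↦ by positivity]
  have hP : x ^ k * P ≤ exp (B * m) := by
    refine (pow_mul_sum_prod_factorial_rpow_le_exp s k n (by positivity)).trans (exp_le_exp.2 ?_)
    calc (n : ℝ) * ∑ j ∈ range k, ((j + 1)! : ℝ) ^ s * x ^ (j + 1)
        ≤ n * ∑ j ∈ range k, x * ((m : ℝ) ^ s * x) ^ j := by
          refine mul_le_mul_of_nonneg_left (sum_le_sum fun j hj ↦ ?_) (Nat.cast_nonneg n)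
          exact factorial_rpow_mul_pow_le hs (by positivity) (by simp at hj; omega)
      _ = m * ∑ j ∈ range k, ((m : ℝ) ^ s * x) ^ j := by
          rw [← mul_sum, ← mul_assoc, mul_div_cancel₀ _ (by positivity)]
      _ ≤ m * B := by gcongr; exact hB m n hn hmL
      _ = B * m := mul_comm _ _
  rw [hS, div_pow, mul_div_assoc', div_le_div_iff₀ (by positivity) (by positivity)]
  have hlog := log_rpow_pow_le (by positivity : 0 < A) hn1.le hm
  have hfact := pow_pred_le_exp_mul_factorial hm
  have hxn : x ^ k * (n : ℝ) ^ k = (m : ℝ) ^ k := by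
    rw [← mul_pow, div_mul_cancel₀ _ (by positivity)]
  have hnk : (n : ℝ) ^ k * n = (n : ℝ) ^ m := by rw [← pow_succ, Nat.sub_add_cancel hm]
  calc P * (log n ^ A) ^ m ≤ P * (((2 * A) ^ A) ^ m * n * ((m : ℝ) ^ k) ^ A) := by gcongr
    _ = (x ^ k * P) * ((n : ℝ) ^ k * n) * ((2 * A) ^ A) ^ m * ((m : ℝ) ^ k) ^ s := by
        rw [rpow_add' (pow_nonneg hm0.le k) (by positivity : A ≠ 0), rpow_one, ← hxn]; ring
    _ ≤ exp (B * m) * ((n : ℝ) ^ k * n) * ((2 * A) ^ A) ^ m * (exp m * k !) ^ s := by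
        gcongr
    _ = ((2 * A) ^ A * exp (s + B)) ^ m * n ^ m * (k ! : ℝ) ^ s := by
        rw [mul_rpow (exp_pos _).le (Nat.cast_nonneg _), ← exp_mul, hnk, mul_pow, ← exp_nat_mul,
          show (m : ℝ) * (s + B) = B * m + m * s by ring, exp_add]
        ring

theorem sum_multinomial_bound_mid_m_general (p q p' q' c : ℝ) (hq : 1 < q) (hqp : q ≤ p)
    (hp' : 1/p + 1/p' = 1) (hq' : 1/q + 1/q' = 1) (hc : 1 < c) :
    ∃ C : ℝ, 0 < C ∧ ∀ m n : ℕ, 2 ≤ n →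
      Real.log n ^ (1/c) ≤ (m : ℝ) → (m : ℝ) ≤ Real.log n ^ c →
      (∑ α ∈ Lam (m-1) n,
          (((m-1).factorial : ℝ) / ∏ i, ((α i).factorial : ℝ)) ^ ((1/p - 1/q) * q'))
          ^ ((1:ℝ)/q')
        ≤ C ^ m * (n : ℝ) ^ ((m : ℝ)/q') / Real.log n ^ ((m : ℝ)/p') := by
  have hq0 : 0 < q := by linarith
  have hq'0 : 0 < q' := one_div_pos.1 (by linarith [(div_lt_one hq0).2 hq])
  set s := (1/q - 1/p) * q'
  have hs : 0 ≤ s := mul_nonneg (sub_nonneg.2 (one_div_le_one_div_of_le hq0 hqp)) hq'0.le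
  have hsp' : (1 + s) / q' = 1 / p' := by
    rw [add_div, mul_div_cancel_right₀ _ hq'0.ne']
    linarith
  obtain ⟨K, hK, hsum⟩ := exists_sum_multinomial_rpow_neg_le hs (by linarith : 0 < c)
  refine ⟨K ^ (1 / q'), by positivity, fun m n hn hm1 hmL ↦ ?_⟩
  have hL : 0 < log n := log_pos (by exact_mod_cast hn)
  have hm : 1 ≤ m := by exact_mod_cast (rpow_pos_of_pos hL _).trans_le hm1
  have hexp : (1 + s) * (m * (1 / q')) = m / p' := by rw [div_eq_mul_one_div _ p', ← hsp']; ring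
  rw [show (1/p - 1/q) * q' = -s by ring]
  calc _ ≤ (K ^ m * (n / log n ^ (1 + s)) ^ m) ^ (1 / q') := by
        gcongr; exact hsum m n hn hm hmL
    _ = _ := by
        rw [← mul_pow, ← rpow_natCast, ← rpow_mul (by positivity),
          mul_rpow hK.le (by positivity), div_rpow (Nat.cast_nonneg _) (by positivity),
          ← rpow_mul hL.le, mul_div_assoc', ← rpow_mul_natCast hK.le, mul_comm (1 / q'), hexp,
          mul_one_div]

/-- For `1 < q ≤ p ≤ 2` with conjugate exponents `p'`, `q'` and `c > 1`, there is `C > 0`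
such that for `n ≥ 2` and `(log n)^(1/c) ≤ m ≤ (log n)^c`:
`(Σ_{α ∈ Λ(m−1,n)} ((m−1)!/α!)^((1/p − 1/q) q'))^(1/q') ≤ C^m n^(m/q') / (log n)^(m/p')`. -/
theorem sum_multinomial_bound_mid_m (p q p' q' c : ℝ) (hq : 1 < q) (hqp : q ≤ p) (hp : p ≤ 2)
    (hp' : 1/p + 1/p' = 1) (hq' : 1/q + 1/q' = 1) (hc : 1 < c) :
    ∃ C : ℝ, 0 < C ∧ ∀ m n : ℕ, 2 ≤ n →
      Real.log n ^ (1/c) ≤ (m : ℝ) → (m : ℝ) ≤ Real.log n ^ c →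
      (∑ α ∈ Lam (m-1) n,
          (((m-1).factorial : ℝ) / ∏ i, ((α i).factorial : ℝ)) ^ ((1/p - 1/q) * q'))
          ^ ((1:ℝ)/q')
        ≤ C ^ m * (n : ℝ) ^ ((m : ℝ)/q') / Real.log n ^ ((m : ℝ)/p') :=
  sum_multinomial_bound_mid_m_general p q p' q' c hq hqp hp' hq' hc
end

section
/- Let m, n, k ∈ ℕ with m ≥ k + 2. The number of multi-indices α ∈ Λ(m−1,n) for which α_i ≥ k+1 for at least one coordinate i is at most n · |Λ(m−k−2, n)| = n · C(n + m − k − 3, m − k − 2), where C(·,·) denotes the binomial coefficient. Moreover, if m ≤ n this quantity is at most 2^m · n^{m−k−1} / (m−k−2)!. -/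
open scoped ENNReal NNReal BigOperators

/-!
A multi-index `α ∈ Λ(M, N)` with `c ≤ α i` arises from a unique `β ∈ Λ(M - c, N)` by adding `c`
to its `i`-th coordinate, so a union bound over `i` gives the first estimate. Stars and bars
identifies `Λ(M, N)` with `Sym (Fin N) M`, and `C(N + s - 1, s) ≤ (2N)^s / s!` once `s ≤ N + 1`.
-/

lemma mem_Lam {M N : ℕ} {α : Fin N → ℕ} : α ∈ Lam M N ↔ ∑ i, α i = M :=
  Finset.Nat.mem_antidiagonalTuple

lemma card_Lam (M N : ℕ) : (Lam M N).card = (N + M - 1).choose M := by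
  rw [Finset.card_eq_of_equiv_fintype
    ((Equiv.subtypeEquivRight fun _ => mem_Lam).trans (Sym.equivNatSumOfFintype (Fin N) M).symm),
    Sym.card_sym_eq_choose, Fintype.card_fin]

lemma filter_le_apply_Lam_eq_image {M N c : ℕ} (i : Fin N) (hc : c ≤ M) :
    (Lam M N).filter (fun α => c ≤ α i) = (Lam (M - c) N).image (· + Pi.single i c) := by
  ext α
  simp only [Finset.mem_filter, mem_Lam, Finset.mem_image]
  constructor
  · rintro ⟨hsum, hi⟩
    have hle : Pi.single i c ≤ α := by
      intro j
      rcases eq_or_ne j i with rfl | hj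
      · simpa using hi
      · simp [hj]
    have hsplit := congrArg (fun β : Fin N → ℕ => ∑ j, β j) (tsub_add_cancel_of_le hle)
    simp only [Pi.add_apply, Finset.sum_add_distrib, Finset.sum_pi_single', Finset.mem_univ,
      if_true] at hsplit
    exact ⟨α - Pi.single i c, by omega, tsub_add_cancel_of_le hle⟩
  · rintro ⟨β, hβ, rfl⟩
    simp [Finset.sum_add_distrib, hβ, hc]

lemma card_filter_le_apply_Lam {M N c : ℕ} (i : Fin N) (hc : c ≤ M) :
    ((Lam M N).filter (fun α => c ≤ α i)).card = (Lam (M - c) N).card := by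
  rw [filter_le_apply_Lam_eq_image i hc, Finset.card_image_of_injective _ (add_left_injective _)]

lemma card_filter_exists_le_apply_Lam_le {M N c : ℕ} (hc : c ≤ M) :
    ((Lam M N).filter (fun α => ∃ i, c ≤ α i)).card ≤ N * (Lam (M - c) N).card := by
  calc ((Lam M N).filter (fun α => ∃ i, c ≤ α i)).card
      = (Finset.univ.biUnion fun i => (Lam M N).filter (fun α => c ≤ α i)).card := by
        congr 1; ext α; simp
    _ ≤ ∑ i, ((Lam M N).filter (fun α => c ≤ α i)).card := Finset.card_biUnion_le
    _ = N * (Lam (M - c) N).card := by simp [card_filter_le_apply_Lam _ hc]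

lemma choose_pred_add_le {N s : ℕ} (hs : s ≤ N + 1) :
    ((N + s - 1).choose s : ℝ) ≤ 2 ^ s * (N : ℝ) ^ s / s.factorial := by
  calc ((N + s - 1).choose s : ℝ) ≤ ((N + s - 1 : ℕ) : ℝ) ^ s / s.factorial :=
        Nat.choose_le_pow_div s _
    _ ≤ ((2 * N : ℕ) : ℝ) ^ s / s.factorial := by gcongr; omega
    _ = 2 ^ s * (N : ℝ) ^ s / s.factorial := by push_cast; ring

theorem card_unbounded_indices_le_general (m n k : ℕ) (hmk : k + 2 ≤ m) :
    (((Lam (m-1) n).filter (fun α => ∃ i, k + 1 ≤ α i)).card ≤ n * (Lam (m-k-2) n).card) ∧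
      ((Lam (m-k-2) n).card = Nat.choose (n + m - k - 3) (m - k - 2)) ∧
      (m ≤ n →
        ((((Lam (m-1) n).filter (fun α => ∃ i, k + 1 ≤ α i)).card : ℝ) ≤
          2 ^ m * (n : ℝ) ^ (m - k - 1) / ((m - k - 2).factorial : ℝ))) := by
  have hcount := card_filter_exists_le_apply_Lam_le (N := n) (show k + 1 ≤ m - 1 by omega)
  rw [show m - 1 - (k + 1) = m - k - 2 by omega] at hcount
  have hcard : (Lam (m-k-2) n).card = Nat.choose (n + m - k - 3) (m - k - 2) := by
    rw [card_Lam, show n + (m - k - 2) - 1 = n + m - k - 3 by omega]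
  refine ⟨hcount, hcard, fun hmn => ?_⟩
  set s := m - k - 2
  rw [card_Lam] at hcount
  calc (((Lam (m-1) n).filter (fun α => ∃ i, k + 1 ≤ α i)).card : ℝ)
      ≤ n * (n + s - 1).choose s := by exact_mod_cast hcount
    _ ≤ n * (2 ^ s * (n : ℝ) ^ s / s.factorial) := by gcongr; exact choose_pred_add_le (by omega)
    _ = 2 ^ s * (n : ℝ) ^ (s + 1) / s.factorial := by ring
    _ ≤ 2 ^ m * (n : ℝ) ^ (m - k - 1) / s.factorial := by
        rw [show m - k - 1 = s + 1 by omega]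
        gcongr
        · norm_num
        · omega

/-- For `m ≥ k + 2`, the number of `α ∈ Λ(m−1,n)` with some coordinate `≥ k+1` is at most
`n · |Λ(m−k−2,n)| = n · C(n+m−k−3, m−k−2)`; and if moreover `m ≤ n`, it is at most
`2^m n^(m−k−1)/(m−k−2)!`. -/
theorem card_unbounded_indices_le (m n k : ℕ) (hn : 1 ≤ n) (hmk : k + 2 ≤ m) :
    (((Lam (m-1) n).filter (fun α => ∃ i, k + 1 ≤ α i)).card ≤ n * (Lam (m-k-2) n).card) ∧
      ((Lam (m-k-2) n).card = Nat.choose (n + m - k - 3) (m - k - 2)) ∧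
      (m ≤ n →
        ((((Lam (m-1) n).filter (fun α => ∃ i, k + 1 ≤ α i)).card : ℝ) ≤
          2 ^ m * (n : ℝ) ^ (m - k - 1) / ((m - k - 2).factorial : ℝ))) :=
  card_unbounded_indices_le_general m n k hmk
end
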